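/- arXiv:0912.0194 — 2 statements merged into one kernel-verified Lean document; each statement's English description precedes it below -/
import Mathlib

section
/- Let t > 0 and let α, β be real numbers with 0 ≤ β ≤ α, and set k(x,y) = (4πt)^{-1/2}·exp(−α|x| − (x−y)²/(4t) + β|y|). Then for every f ∈ L²(ℝ), the integral ∫_ℝ k(x,y) f(y) dy converges absolutely for almost every x, the resulting function Kf belongs to L²(ℝ), and ‖Kf‖_{L²(ℝ)} ≤ 2·exp((α²+β²)t/2)·‖f‖_{L²(ℝ)}. -/
/-!
Since `0 ≤ β ≤ α`, the triangle inequality gives `-α|x| + β|y| ≤ β|x - y|`, so the kernel is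
dominated by the translation kernel `g(x - y)` with `g(u) = (4πt)^{-1/2} e^{β|u| - u²/(4t)}`.
Completing the square, `(4πt)^{-1/2} e^{βu - u²/(4t)}` is `e^{β²t}` times the density of the
normal law with mean `2βt` and variance `2t`; treating `u ≥ 0` and `u ≤ 0` separately gives
`‖g‖₁ ≤ 2e^{β²t}`. Hence every row and column integral of the kernel is at most `2e^{β²t}`, and
Schur's test (Cauchy–Schwarz against the kernel in `y`, then Tonelli) bounds the operator on
`L²` by this constant, which is at most `2e^{(α²+β²)t/2}`.
-/

open MeasureTheory ProbabilityTheory Function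
open scoped ENNReal NNReal

theorem lintegral_enorm_sq_eq_eLpNorm_sq {α ε : Type*} [MeasurableSpace α] {μ : Measure α}
    [TopologicalSpace ε] [ContinuousENorm ε] (f : α → ε) :
    ∫⁻ x, ‖f x‖ₑ ^ 2 ∂μ = eLpNorm f 2 μ ^ 2 := by
  simpa only [NNReal.coe_ofNat, ENNReal.rpow_two, ENNReal.coe_ofNat] using
    (eLpNorm_nnreal_pow_eq_lintegral (f := f) (μ := μ) (p := 2) two_ne_zero).symm

theorem ENNReal.lintegral_mul_sq_le {β : Type*} [MeasurableSpace β] {ν : Measure β}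
    {K F : β → ℝ≥0∞} (hK : AEMeasurable K ν) (hF : AEMeasurable F ν) :
    (∫⁻ y, K y * F y ∂ν) ^ 2 ≤ (∫⁻ y, K y ∂ν) * ∫⁻ y, K y * F y ^ 2 ∂ν := by
  have hsplit (y : β) : K y * F y = K y ^ (2⁻¹ : ℝ) * (K y * F y ^ 2) ^ (2⁻¹ : ℝ) := by
    have hsqrt : (F y ^ 2) ^ (2⁻¹ : ℝ) = F y := by
      exact_mod_cast ENNReal.pow_rpow_inv_natCast two_ne_zero (F y)
    rw [ENNReal.mul_rpow_of_nonneg _ _ (by norm_num), hsqrt, ← mul_assoc,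
      ← ENNReal.rpow_add_of_nonneg _ _ (by norm_num) (by norm_num)]
    norm_num
  calc (∫⁻ y, K y * F y ∂ν) ^ 2
      = (∫⁻ y, K y ^ (2⁻¹ : ℝ) * (K y * F y ^ 2) ^ (2⁻¹ : ℝ) ∂ν) ^ 2 := by simp_rw [← hsplit]
    _ ≤ ((∫⁻ y, K y ∂ν) ^ (2⁻¹ : ℝ) * (∫⁻ y, K y * F y ^ 2 ∂ν) ^ (2⁻¹ : ℝ)) ^ 2 :=
        pow_le_pow_left' (ENNReal.lintegral_mul_norm_pow_le hK (hK.mul (hF.pow_const 2))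
          (by norm_num) (by norm_num) (by norm_num)) 2
    _ = (∫⁻ y, K y ∂ν) * ∫⁻ y, K y * F y ^ 2 ∂ν := by
        have hsq (x : ℝ≥0∞) : (x ^ (2⁻¹ : ℝ)) ^ 2 = x := by
          exact_mod_cast ENNReal.rpow_inv_natCast_pow two_ne_zero x
        rw [mul_pow, hsq, hsq]

section SchurTest

variable {α β : Type*} [MeasurableSpace α] [MeasurableSpace β] {μ : Measure α} {ν : Measure β}
  [SFinite ν] {K : α → β → ℝ≥0∞} {F : β → ℝ≥0∞} {A B : ℝ≥0∞}

theorem aemeasurable_lintegral_mul_sq (hK : Measurable (uncurry K)) (hF : AEMeasurable F ν) :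
    AEMeasurable (fun x => ∫⁻ y, K x y * F y ^ 2 ∂ν) μ :=
  ((hK.aemeasurable (μ := μ.prod ν)).mul (hF.pow_const 2).comp_snd).lintegral_prod_right'

variable [SFinite μ]

theorem lintegral_lintegral_mul_sq_le (hK : Measurable (uncurry K)) (hF : AEMeasurable F ν)
    (hcol : ∀ y, ∫⁻ x, K x y ∂μ ≤ B) :
    ∫⁻ x, ∫⁻ y, K x y * F y ^ 2 ∂ν ∂μ ≤ B * ∫⁻ y, F y ^ 2 ∂ν := by
  rw [lintegral_lintegral_swap (hK.aemeasurable.mul (hF.pow_const 2).comp_snd)]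
  calc ∫⁻ y, ∫⁻ x, K x y * F y ^ 2 ∂μ ∂ν = ∫⁻ y, (∫⁻ x, K x y ∂μ) * F y ^ 2 ∂ν :=
        lintegral_congr fun y => lintegral_mul_const _ hK.of_uncurry_right
    _ ≤ ∫⁻ y, B * F y ^ 2 ∂ν := lintegral_mono fun y => mul_le_mul_left (hcol y) _
    _ = B * ∫⁻ y, F y ^ 2 ∂ν := lintegral_const_mul'' B (hF.pow_const 2)

theorem lintegral_sq_lintegral_mul_le (hK : Measurable (uncurry K)) (hF : AEMeasurable F ν)
    (hrow : ∀ x, ∫⁻ y, K x y ∂ν ≤ A) (hcol : ∀ y, ∫⁻ x, K x y ∂μ ≤ B) :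
    ∫⁻ x, (∫⁻ y, K x y * F y ∂ν) ^ 2 ∂μ ≤ A * B * ∫⁻ y, F y ^ 2 ∂ν :=
  calc ∫⁻ x, (∫⁻ y, K x y * F y ∂ν) ^ 2 ∂μ ≤ ∫⁻ x, A * ∫⁻ y, K x y * F y ^ 2 ∂ν ∂μ :=
        lintegral_mono fun x =>
          (ENNReal.lintegral_mul_sq_le hK.of_uncurry_left.aemeasurable hF).trans
            (mul_le_mul_left (hrow x) _)
    _ = A * ∫⁻ x, ∫⁻ y, K x y * F y ^ 2 ∂ν ∂μ :=
        lintegral_const_mul'' A (aemeasurable_lintegral_mul_sq hK hF)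
    _ ≤ A * (B * ∫⁻ y, F y ^ 2 ∂ν) := mul_le_mul_right (lintegral_lintegral_mul_sq_le hK hF hcol) A
    _ = A * B * ∫⁻ y, F y ^ 2 ∂ν := (mul_assoc _ _ _).symm

variable {𝕜 : Type*} [RCLike 𝕜] {k : α → β → 𝕜} {f : β → 𝕜}

theorem ae_integrable_kernel_mul_of_schur (hk : StronglyMeasurable (uncurry k))
    (hf : MemLp f 2 ν) (hA : A ≠ ∞) (hB : B ≠ ∞)
    (hrow : ∀ x, ∫⁻ y, ‖k x y‖ₑ ∂ν ≤ A) (hcol : ∀ y, ∫⁻ x, ‖k x y‖ₑ ∂μ ≤ B) :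
    ∀ᵐ x ∂μ, Integrable (fun y => k x y * f y) ν := by
  have hK : Measurable (uncurry fun x y => ‖k x y‖ₑ) := hk.measurable.enorm
  have hW : ∫⁻ x, ∫⁻ y, ‖k x y‖ₑ * ‖f y‖ₑ ^ 2 ∂ν ∂μ ≠ ∞ := by
    refine ((lintegral_lintegral_mul_sq_le hK hf.1.enorm hcol).trans_lt ?_).ne
    rw [lintegral_enorm_sq_eq_eLpNorm_sq]
    exact ENNReal.mul_lt_top hB.lt_top (ENNReal.pow_lt_top hf.eLpNorm_lt_top)
  filter_upwards [ae_lt_top' (aemeasurable_lintegral_mul_sq hK hf.1.enorm) hW] with x hWx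
  refine ⟨hk.of_uncurry_left.aestronglyMeasurable.mul hf.1, ?_⟩
  have hsq : (∫⁻ y, ‖k x y‖ₑ * ‖f y‖ₑ ∂ν) ^ 2 < ∞ :=
    (ENNReal.lintegral_mul_sq_le hK.of_uncurry_left.aemeasurable hf.1.enorm).trans_lt
      (ENNReal.mul_lt_top ((hrow x).trans_lt hA.lt_top) hWx)
  simpa [HasFiniteIntegral, enorm_mul] using hsq

theorem eLpNorm_integral_kernel_mul_sq_le_of_schur (hk : StronglyMeasurable (uncurry k))
    (hf : AEStronglyMeasurable f ν)
    (hrow : ∀ x, ∫⁻ y, ‖k x y‖ₑ ∂ν ≤ A) (hcol : ∀ y, ∫⁻ x, ‖k x y‖ₑ ∂μ ≤ B) :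
    eLpNorm (fun x => ∫ y, k x y * f y ∂ν) 2 μ ^ 2 ≤ A * B * eLpNorm f 2 ν ^ 2 := by
  rw [← lintegral_enorm_sq_eq_eLpNorm_sq, ← lintegral_enorm_sq_eq_eLpNorm_sq]
  calc ∫⁻ x, ‖∫ y, k x y * f y ∂ν‖ₑ ^ 2 ∂μ ≤ ∫⁻ x, (∫⁻ y, ‖k x y‖ₑ * ‖f y‖ₑ ∂ν) ^ 2 ∂μ := by
        refine lintegral_mono fun x => pow_le_pow_left' ?_ 2
        simpa only [enorm_mul] using enorm_integral_le_lintegral_enorm (fun y => k x y * f y)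
    _ ≤ A * B * ∫⁻ y, ‖f y‖ₑ ^ 2 ∂ν :=
        lintegral_sq_lintegral_mul_le hk.measurable.enorm hf.enorm hrow hcol

theorem memLp_integral_kernel_mul_of_schur (hk : StronglyMeasurable (uncurry k))
    (hf : MemLp f 2 ν) (hA : A ≠ ∞) (hB : B ≠ ∞)
    (hrow : ∀ x, ∫⁻ y, ‖k x y‖ₑ ∂ν ≤ A) (hcol : ∀ y, ∫⁻ x, ‖k x y‖ₑ ∂μ ≤ B) :
    MemLp (fun x => ∫ y, k x y * f y ∂ν) 2 μ := by
  refine ⟨(hk.aestronglyMeasurable.mul hf.1.comp_snd).integral_prod_right', ?_⟩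
  have hsq := (eLpNorm_integral_kernel_mul_sq_le_of_schur hk hf.1 hrow hcol).trans_lt
    (ENNReal.mul_lt_top (ENNReal.mul_lt_top hA.lt_top hB.lt_top)
      (ENNReal.pow_lt_top hf.eLpNorm_lt_top))
  simpa using hsq

end SchurTest

section TranslationKernel

variable {G : Type*} [AddCommGroup G] [MeasurableSpace G] [MeasurableAdd G]
  {μ : Measure G} [μ.IsAddLeftInvariant] {K : G → G → ℝ≥0∞} {g : G → ℝ≥0∞}

theorem lintegral_le_of_le_comp_sub_left [MeasurableNeg G] [μ.IsNegInvariant]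
    (h : ∀ x y, K x y ≤ g (x - y)) (x : G) :
    ∫⁻ y, K x y ∂μ ≤ ∫⁻ u, g u ∂μ :=
  (lintegral_mono (h x)).trans_eq (lintegral_sub_left_eq_self g x)

theorem lintegral_le_of_le_comp_sub_right (h : ∀ x y, K x y ≤ g (x - y)) (y : G) :
    ∫⁻ x, K x y ∂μ ≤ ∫⁻ u, g u ∂μ :=
  (lintegral_mono fun x => h x y).trans_eq (lintegral_sub_right_eq_self g y)

end TranslationKernel

theorem neg_mul_abs_add_mul_abs_le {a b : ℝ} (hb : 0 ≤ b) (hba : b ≤ a) (x y : ℝ) :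
    -a * |x| + b * |y| ≤ b * |x - y| := by
  have htri : |y| ≤ |x| + |x - y| := by
    simpa [abs_sub_comm] using abs_add_le x (y - x)
  nlinarith [abs_nonneg x]

theorem inv_sqrt_mul_exp_eq_gaussianPDFReal {t : ℝ} (ht : 0 ≤ t) (b u : ℝ) :
    (Real.sqrt (4 * Real.pi * t))⁻¹ * Real.exp (b * u - u ^ 2 / (4 * t))
      = Real.exp (b ^ 2 * t) * gaussianPDFReal (2 * b * t) (2 * t).toNNReal u := by
  rw [gaussianPDFReal, Real.coe_toNNReal _ (by positivity), mul_left_comm, ← Real.exp_add]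
  rcases ht.eq_or_lt with rfl | ht
  · simp
  congr 2
  · ring_nf
  · field_simp
    ring

theorem lintegral_inv_sqrt_mul_exp {t : ℝ} (ht : 0 < t) (b : ℝ) :
    ∫⁻ u, ENNReal.ofReal ((Real.sqrt (4 * Real.pi * t))⁻¹ * Real.exp (b * u - u ^ 2 / (4 * t)))
      = ENNReal.ofReal (Real.exp (b ^ 2 * t)) := by
  simp_rw [inv_sqrt_mul_exp_eq_gaussianPDFReal ht.le, ENNReal.ofReal_mul (Real.exp_pos _).le]
  rw [lintegral_const_mul _ (measurable_gaussianPDFReal _ _).ennreal_ofReal,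
    lintegral_gaussianPDFReal_eq_one _ (by simpa using ht), mul_one]

theorem lintegral_inv_sqrt_mul_exp_abs_le {t : ℝ} (ht : 0 < t) (b : ℝ) :
    ∫⁻ u, ENNReal.ofReal ((Real.sqrt (4 * Real.pi * t))⁻¹ * Real.exp (b * |u| - u ^ 2 / (4 * t)))
      ≤ ENNReal.ofReal (2 * Real.exp (b ^ 2 * t)) := by
  set h : ℝ → ℝ≥0∞ := fun u =>
    ENNReal.ofReal ((Real.sqrt (4 * Real.pi * t))⁻¹ * Real.exp (b * u - u ^ 2 / (4 * t)))
  have hsplit (u : ℝ) : ENNReal.ofReal ((Real.sqrt (4 * Real.pi * t))⁻¹ *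
      Real.exp (b * |u| - u ^ 2 / (4 * t))) ≤ h u + h (-u) := by
    rcases abs_choice u with hu | hu
    · rw [hu]; exact le_self_add
    · rw [hu, ← neg_sq]; exact le_add_self
  calc _ ≤ ∫⁻ u, h u + h (-u) := lintegral_mono hsplit
    _ = 2 * ENNReal.ofReal (Real.exp (b ^ 2 * t)) := by
        rw [lintegral_add_left (by fun_prop), lintegral_neg_eq_self h,
          lintegral_inv_sqrt_mul_exp ht, two_mul]
    _ = ENNReal.ofReal (2 * Real.exp (b ^ 2 * t)) := by
        rw [ENNReal.ofReal_mul zero_le_two, ENNReal.ofReal_ofNat]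

/-- Schur test for the weighted heat kernel
`k(x,y) = (4πt)^{-1/2}·exp(−α|x| − (x−y)²/(4t) + β|y|)`, `0 ≤ β ≤ α`, `t > 0`:
for every `f ∈ L²(ℝ)` the integral `∫ k(x,y) f(y) dy` converges absolutely for
a.e. `x`, the resulting function lies in `L²(ℝ)` and its `L²`-norm is at most
`2·exp((α²+β²)t/2)` times that of `f`. -/
theorem stmt5 (t a b : ℝ) (ht : 0 < t) (hb : 0 ≤ b) (hba : b ≤ a)
    (k : ℝ → ℝ → ℝ)
    (hk : ∀ x y : ℝ,
      k x y = (Real.sqrt (4 * Real.pi * t))⁻¹ *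
        Real.exp (-a * |x| - (x - y) ^ 2 / (4 * t) + b * |y|))
    (f : ℝ → ℂ) (hf : MemLp f 2 volume) :
    (∀ᵐ x : ℝ, Integrable (fun y : ℝ => (k x y : ℂ) * f y) volume) ∧
    MemLp (fun x : ℝ => ∫ y : ℝ, (k x y : ℂ) * f y) 2 volume ∧
    eLpNorm (fun x : ℝ => ∫ y : ℝ, (k x y : ℂ) * f y) 2 volume
      ≤ ENNReal.ofReal (2 * Real.exp ((a ^ 2 + b ^ 2) * t / 2)) * eLpNorm f 2 volume := by
  have hk_meas : StronglyMeasurable (uncurry fun x y => (k x y : ℂ)) := by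
    simp_rw [hk]
    exact Continuous.stronglyMeasurable (by fun_prop)
  have hdom (x y : ℝ) : ‖(k x y : ℂ)‖ₑ ≤ ENNReal.ofReal ((Real.sqrt (4 * Real.pi * t))⁻¹ *
      Real.exp (b * |x - y| - (x - y) ^ 2 / (4 * t))) := by
    rw [← ofReal_norm, Complex.norm_real, hk, Real.norm_of_nonneg (by positivity)]
    refine ENNReal.ofReal_le_ofReal
      (mul_le_mul_of_nonneg_left (Real.exp_le_exp.2 ?_) (by positivity))
    linarith [neg_mul_abs_add_mul_abs_le hb hba x y]
  have hg := lintegral_inv_sqrt_mul_exp_abs_le ht b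
  have hrow x := (lintegral_le_of_le_comp_sub_left hdom x).trans hg
  have hcol y := (lintegral_le_of_le_comp_sub_right hdom y).trans hg
  refine ⟨ae_integrable_kernel_mul_of_schur hk_meas hf ENNReal.ofReal_ne_top
      ENNReal.ofReal_ne_top hrow hcol,
    memLp_integral_kernel_mul_of_schur hk_meas hf ENNReal.ofReal_ne_top
      ENNReal.ofReal_ne_top hrow hcol, ?_⟩
  have hsq := eLpNorm_integral_kernel_mul_sq_le_of_schur hk_meas hf.1 hrow hcol
  have hconst : b ^ 2 * t ≤ (a ^ 2 + b ^ 2) * t / 2 := by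
    nlinarith [mul_le_mul_of_nonneg_right (pow_le_pow_left₀ hb hba 2) ht.le]
  calc _ ≤ ENNReal.ofReal (2 * Real.exp (b ^ 2 * t)) * eLpNorm f 2 volume := by
        rwa [← ENNReal.pow_le_pow_left_iff two_ne_zero, mul_pow, sq (ENNReal.ofReal _)]
    _ ≤ _ := by gcongr
end

section
/- Let n ≥ q ≥ 1 be integers, t > 0, and let f : ℝ^q → ℂ be continuous and rapidly decreasing on the positive orthant, i.e. for every N ∈ ℕ there is C_N ≥ 0 with |f(u)| ≤ C_N·(1+‖u‖)^{−N} whenever all coordinates of u are ≥ 0. Then t^{2q}·∫_{S_n} f(t²σ₁, …, t²σ_q) dσ = (1/(n−q)!)·∫_{T(t²)} (1 − t^{−2}(u₁+⋯+u_q))^{n−q}·f(u) du, where T(c) = {u ∈ ℝ^q : u_j ≥ 0, u₁+⋯+u_q ≤ c}. -/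
/-!
Split `Fin n → ℝ` as `(Fin q → ℝ) × (Fin (n - q) → ℝ)`. Over a point `x` of the
`q`-dimensional solid simplex, the fibre of the `n`-dimensional one is the solid simplex
`{y ≥ 0, ∑ y ≤ 1 - ∑ x}` of dimension `n - q`, whose volume `(1 - ∑ x) ^ (n - q) / (n - q)!`
is found by slicing off one coordinate at a time. By Fubini the left side is therefore a
`q`-dimensional integral against this weight, and the substitution `u = t² x`, of Jacobian
`t^{2q}`, turns it into the right side.
-/

open MeasureTheory Pointwise

def solidSimplex (k : ℕ) (c : ℝ) : Set (Fin k → ℝ) := {u | (∀ j, 0 ≤ u j) ∧ ∑ j, u j ≤ c}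

lemma isClosed_solidSimplex (k : ℕ) (c : ℝ) : IsClosed (solidSimplex k c) :=
  isClosed_Ici.inter
    (isClosed_le (continuous_finsetSum _ fun j _ => continuous_apply j) continuous_const)

lemma measurableSet_solidSimplex (k : ℕ) (c : ℝ) : MeasurableSet (solidSimplex k c) :=
  (isClosed_solidSimplex k c).measurableSet

lemma solidSimplex_subset_Icc (k : ℕ) (c : ℝ) : solidSimplex k c ⊆ Set.Icc 0 fun _ => c :=
  fun _ ⟨h0, hs⟩ =>
    ⟨h0, fun j => (Finset.single_le_sum (fun i _ => h0 i) (Finset.mem_univ j)).trans hs⟩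

lemma isCompact_solidSimplex (k : ℕ) (c : ℝ) : IsCompact (solidSimplex k c) :=
  isCompact_Icc.of_isClosed_subset (isClosed_solidSimplex k c) (solidSimplex_subset_Icc k c)

lemma solidSimplex_eq_empty (k : ℕ) {c : ℝ} (hc : c < 0) : solidSimplex k c = ∅ :=
  Set.eq_empty_of_forall_notMem fun _ ⟨h0, hs⟩ =>
    (Finset.sum_nonneg fun j _ => h0 j).not_gt (hs.trans_lt hc)

lemma smul_solidSimplex (k : ℕ) (c : ℝ) {R : ℝ} (hR : 0 < R) :
    R • solidSimplex k c = solidSimplex k (R * c) := by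
  ext u
  simp only [Set.mem_smul_set_iff_inv_smul_mem₀ hR.ne', solidSimplex, Set.mem_ofPred_eq,
    Pi.smul_apply, smul_eq_mul, ← Finset.mul_sum, mul_nonneg_iff_of_pos_left (inv_pos.2 hR),
    inv_mul_le_iff₀ hR]

lemma cons_mem_solidSimplex_iff {k : ℕ} {c x : ℝ} {y : Fin k → ℝ} :
    Fin.cons x y ∈ solidSimplex (k + 1) c ↔ 0 ≤ x ∧ y ∈ solidSimplex k (c - x) := by
  simp only [solidSimplex, Set.mem_ofPred_eq, Fin.forall_fin_succ, Fin.sum_univ_succ,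
    Fin.cons_zero, Fin.cons_succ, le_sub_iff_add_le', and_assoc]

lemma append_mem_solidSimplex_iff {q m : ℕ} {c : ℝ} {x : Fin q → ℝ} {y : Fin m → ℝ} :
    Fin.append x y ∈ solidSimplex (q + m) c ↔
      (∀ j, 0 ≤ x j) ∧ y ∈ solidSimplex m (c - ∑ j, x j) := by
  simp only [solidSimplex, Set.mem_ofPred_eq, Fin.forall_fin_add, Fin.sum_univ_add,
    Fin.append_left, Fin.append_right, le_sub_iff_add_le', and_assoc]

lemma volume_solidSimplex (k : ℕ) {c : ℝ} (hc : 0 ≤ c) :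
    volume (solidSimplex k c) = ENNReal.ofReal (c ^ k / k.factorial) := by
  induction k generalizing c with
  | zero =>
    rw [show solidSimplex 0 c = Set.univ by simp [solidSimplex, hc]]
    simp [volume_pi]
  | succ k ih =>
    have hmp := (volume_preserving_piFinSuccAbove (fun _ : Fin (k + 1) => ℝ) 0).symm
    have hfibre (x : ℝ) : volume (Prod.mk x ⁻¹'
        ((MeasurableEquiv.piFinSuccAbove (fun _ => ℝ) 0).symm ⁻¹' solidSimplex (k + 1) c)) =
        (Set.Icc 0 c).indicator (fun x => ENNReal.ofReal ((c - x) ^ k / k.factorial)) x := by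
      rw [show Prod.mk x ⁻¹' _ = {y | 0 ≤ x ∧ y ∈ solidSimplex k (c - x)} by
        ext y
        simp only [Set.mem_preimage, MeasurableEquiv.piFinSuccAbove_symm_apply,
          Fin.insertNthEquiv_zero]
        exact cons_mem_solidSimplex_iff]
      by_cases hx0 : 0 ≤ x
      · by_cases hxc : x ≤ c
        · simp [hx0, hxc, ih (sub_nonneg.2 hxc)]
        · simp [hx0, hxc, solidSimplex_eq_empty k (sub_neg.2 (not_le.1 hxc))]
      · simp [hx0]
    rw [← hmp.measure_preimage (measurableSet_solidSimplex _ _).nullMeasurableSet,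
      Measure.volume_eq_prod, Measure.prod_apply (hmp.measurable (measurableSet_solidSimplex _ _))]
    simp_rw [hfibre]
    rw [lintegral_indicator measurableSet_Icc, ← ofReal_integral_eq_lintegral_ofReal
      (Continuous.integrableOn_Icc (by fun_prop))
      (ae_restrict_of_forall_mem measurableSet_Icc fun x hx => by
        have := sub_nonneg.2 hx.2; positivity),
      integral_Icc_eq_integral_Ioc, ← intervalIntegral.integral_of_le hc,
      intervalIntegral.integral_div, intervalIntegral.integral_comp_sub_left (· ^ k) c,
      sub_self, sub_zero, integral_pow, Nat.factorial_succ]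
    congr 1
    push_cast
    field_simp
    ring

lemma measureReal_setOf_append_mem_solidSimplex {q m : ℕ} {c : ℝ} (x : Fin q → ℝ) :
    volume.real {y : Fin m → ℝ | Fin.append x y ∈ solidSimplex (q + m) c} =
      (solidSimplex q c).indicator (fun x => (c - ∑ j, x j) ^ m / m.factorial) x := by
  simp only [append_mem_solidSimplex_iff]
  by_cases hx0 : ∀ j, 0 ≤ x j
  · simp only [hx0, implies_true, true_and, Set.ofPred_mem_eq]
    by_cases hxc : ∑ j, x j ≤ c
    · have hc : 0 ≤ c - ∑ j, x j := sub_nonneg.2 hxc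
      rw [Set.indicator_of_mem (show x ∈ solidSimplex q c from ⟨hx0, hxc⟩), measureReal_def,
        volume_solidSimplex m hc, ENNReal.toReal_ofReal (by positivity)]
    · rw [Set.indicator_of_notMem (fun h => hxc h.2),
        solidSimplex_eq_empty m (sub_neg.2 (not_le.1 hxc)), measureReal_empty]
  · simp [hx0, solidSimplex]

def MeasurableEquiv.finAppend (q m : ℕ) : (Fin q → ℝ) × (Fin m → ℝ) ≃ᵐ (Fin (q + m) → ℝ) :=
  (MeasurableEquiv.sumPiEquivProdPi fun _ => ℝ).symm.trans
    (MeasurableEquiv.piCongrLeft (fun _ => ℝ) finSumFinEquiv)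

lemma MeasurableEquiv.finAppend_apply (q m : ℕ) (p : (Fin q → ℝ) × (Fin m → ℝ)) :
    MeasurableEquiv.finAppend q m p = Fin.append p.1 p.2 := by
  ext i
  refine Fin.addCases (fun j => ?_) (fun j => ?_) i <;>
  simp [finAppend, MeasurableEquiv.piCongrLeft, Equiv.piCongrLeft] <;> rfl

lemma MeasurableEquiv.volume_preserving_finAppend (q m : ℕ) :
    MeasurePreserving (MeasurableEquiv.finAppend q m) volume volume := by
  rw [finAppend, MeasurableEquiv.coe_trans]
  exact (volume_measurePreserving_piCongrLeft _ finSumFinEquiv).comp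
    (volume_measurePreserving_sumPiEquivProdPi_symm _)

theorem MeasureTheory.setIntegral_prod_comp_fst {α β E : Type*} [MeasurableSpace α]
    [MeasurableSpace β] {μ : Measure α} {ν : Measure β} [SFinite μ] [SFinite ν]
    [NormedAddCommGroup E] [NormedSpace ℝ E] [CompleteSpace E] {P : Set (α × β)}
    (hP : MeasurableSet P) {g : α → E} (hg : IntegrableOn (fun p => g p.1) P (μ.prod ν)) :
    ∫ p in P, g p.1 ∂μ.prod ν = ∫ x, ν.real (Prod.mk x ⁻¹' P) • g x ∂μ := by
  rw [← integral_indicator hP, integral_prod _ ((integrable_indicator_iff hP).2 hg)]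
  congr 1 with x
  rw [← integral_indicator_const _ (measurable_prodMk_left hP)]
  rfl

lemma setIntegral_solidSimplex_comp_smul {E : Type*} [NormedAddCommGroup E] [NormedSpace ℝ E]
    {k : ℕ} {c R : ℝ} (hR : 0 < R) (h : (Fin k → ℝ) → E) :
    ∫ x in solidSimplex k c, h (R • x) = (R ^ k)⁻¹ • ∫ u in solidSimplex k (R * c), h u := by
  rw [Measure.setIntegral_comp_smul_of_pos _ _ _ hR, Module.finrank_fin_fun,
    smul_solidSimplex k c hR]

lemma setIntegral_solidSimplex_comp_castLE {E : Type*} [NormedAddCommGroup E] [NormedSpace ℝ E]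
    [CompleteSpace E] {n q : ℕ} (hqn : q ≤ n) (c : ℝ) {g : (Fin q → ℝ) → E} (hg : Continuous g) :
    ∫ σ in solidSimplex n c, g (fun j => σ (Fin.castLE hqn j)) =
      ∫ x in solidSimplex q c, ((c - ∑ j, x j) ^ (n - q) / (n - q).factorial) • g x := by
  obtain ⟨m, rfl⟩ : ∃ m, n = q + m := ⟨n - q, by omega⟩
  have he := MeasurableEquiv.volume_preserving_finAppend q m
  have hint : IntegrableOn (fun σ : Fin (q + m) → ℝ => g fun j => σ (Fin.castLE hqn j))
      (solidSimplex (q + m) c) :=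
    (hg.comp (by fun_prop)).continuousOn.integrableOn_compact (isCompact_solidSimplex _ _)
  rw [← he.setIntegral_preimage_emb (MeasurableEquiv.measurableEmbedding _),
    Measure.volume_eq_prod]
  rw [← he.integrableOn_comp_preimage (MeasurableEquiv.measurableEmbedding _),
    Measure.volume_eq_prod] at hint
  have happend (p : (Fin q → ℝ) × (Fin m → ℝ)) :
      (fun j => MeasurableEquiv.finAppend q m p (Fin.castLE hqn j)) = p.1 := by
    ext j
    simp only [MeasurableEquiv.finAppend_apply]
    exact Fin.append_left p.1 p.2 j
  simp only [Function.comp_def, happend] at hint ⊢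
  rw [setIntegral_prod_comp_fst (he.measurable (measurableSet_solidSimplex _ _)) hint,
    Nat.add_sub_cancel_left, ← integral_indicator (measurableSet_solidSimplex q c)]
  congr 1 with x
  rw [Set.indicator_smul_apply_left, ← measureReal_setOf_append_mem_solidSimplex]
  simp only [Set.preimage, MeasurableEquiv.finAppend_apply, Set.mem_ofPred_eq]

theorem stmt7_general (n q : ℕ) (hqn : q ≤ n) (t : ℝ) (ht : 0 < t)
    (f : (Fin q → ℝ) → ℂ) (hf : Continuous f) :
    (t ^ (2 * q)) •
      ∫ σ in {σ : Fin n → ℝ | (∀ j, 0 ≤ σ j) ∧ ∑ j, σ j ≤ 1},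
        f (fun j => t ^ 2 * σ (Fin.castLE hqn j))
    = (((n - q).factorial : ℝ))⁻¹ •
        ∫ u in {u : Fin q → ℝ | (∀ j, 0 ≤ u j) ∧ ∑ j, u j ≤ t ^ 2},
          ((1 - (t ^ 2)⁻¹ * ∑ j, u j) ^ (n - q)) • f u := by
  set R := t ^ 2
  have hR : 0 < R := by positivity
  rw [pow_mul]
  change R ^ q • ∫ σ in solidSimplex n 1, (fun x => f (R • x)) (fun j => σ (Fin.castLE hqn j)) =
    ((n - q).factorial : ℝ)⁻¹ • ∫ u in solidSimplex q R, ((1 - R⁻¹ * ∑ j, u j) ^ (n - q)) • f u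
  have hrescale (x : Fin q → ℝ) : ((1 - ∑ j, x j) ^ (n - q) / (n - q).factorial) • f (R • x) =
      ((n - q).factorial : ℝ)⁻¹ • (1 - R⁻¹ * ∑ j, (R • x) j) ^ (n - q) • f (R • x) := by
    simp only [Pi.smul_apply, smul_eq_mul, ← Finset.mul_sum, inv_mul_cancel_left₀ hR.ne',
      smul_smul, div_eq_inv_mul]
  rw [setIntegral_solidSimplex_comp_castLE hqn 1 (g := fun x => f (R • x)) (by fun_prop)]
  simp_rw [hrescale]
  rw [setIntegral_solidSimplex_comp_smul hR
      (fun u => ((n - q).factorial : ℝ)⁻¹ • (1 - R⁻¹ * ∑ j, u j) ^ (n - q) • f u),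
    integral_smul, smul_comm, mul_one, smul_smul, inv_mul_cancel₀ (pow_pos hR q).ne', one_smul]

/-- Change-of-variables identity: for `f : ℝ^q → ℂ` continuous and rapidly
decreasing on the positive orthant, `1 ≤ q ≤ n` and `t > 0`,
`t^{2q} ∫_{Δ_n} f(t²σ₁,…,t²σ_q) dσ
  = (1/(n−q)!) ∫_{T(t²)} (1 − t^{−2}(u₁+⋯+u_q))^{n−q} f(u) du`,
where `T(c) = {u ∈ ℝ^q : u_j ≥ 0, u₁+⋯+u_q ≤ c}`. -/
theorem stmt7 (n q : ℕ) (hq : 1 ≤ q) (hqn : q ≤ n) (t : ℝ) (ht : 0 < t)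
    (f : (Fin q → ℝ) → ℂ) (hf : Continuous f)
    (hdec : ∀ N : ℕ, ∃ C : ℝ, 0 ≤ C ∧ ∀ u : Fin q → ℝ, (∀ j, 0 ≤ u j) →
      ‖f u‖ ≤ C / (1 + ‖u‖) ^ N) :
    (t ^ (2 * q)) •
      ∫ σ in {σ : Fin n → ℝ | (∀ j, 0 ≤ σ j) ∧ ∑ j, σ j ≤ 1},
        f (fun j => t ^ 2 * σ (Fin.castLE hqn j))
    = (((n - q).factorial : ℝ))⁻¹ •
        ∫ u in {u : Fin q → ℝ | (∀ j, 0 ≤ u j) ∧ ∑ j, u j ≤ t ^ 2},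
          ((1 - (t ^ 2)⁻¹ * ∑ j, u j) ^ (n - q)) • f u :=
  stmt7_general n q hqn t ht f hf
end
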